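/- For events e on process i and e' on process j with i ≠ j, e → e' if and only if V(e)[i] ≤ V(e')[i]. -/

import Mathlib

/-- A distributed computation on `n` processes: each process `p` executes a
finite sequence of `len p` events; `src p k = some (q, m)` means the `k`-th
event of process `p` is a receive whose (unique) matching send is the `m`-th
event of process `q`; `src p k = none` means it is internal or a send. -/
structure Comp (n : ℕ) where
  len : Fin n → ℕ
  src : Fin n → ℕ → Option (Fin n × ℕ)

namespace Comp

variable {n : ℕ}

/-- `e` is an actual event of the computation. -/
def Valid (c : Comp n) (e : Fin n × ℕ) : Prop := e.2 < c.len e.1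

/-- Every receive is matched to a valid send on a different process. -/
def Matched (c : Comp n) : Prop :=
  ∀ p k q m, c.src p k = some (q, m) → q ≠ p ∧ c.Valid (q, m)

/-- One-step causality: program order on a process, or a send-receive edge. -/
def Step (c : Comp n) (e e' : Fin n × ℕ) : Prop :=
  (e.1 = e'.1 ∧ e.2 < e'.2) ∨ c.src e'.1 e'.2 = some e

/-- Happens-before: the smallest transitive relation containing program
order and the send-receive pairs. -/
def hb (c : Comp n) : Fin n × ℕ → Fin n × ℕ → Prop :=
  Relation.TransGen c.Step

/-- `V` is the vector clock of the computation: process `p` increments its own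
component at each of its events, and a receive takes the componentwise max of
the local clock and the sender's clock. -/
def IsVC (c : Comp n) (V : Fin n × ℕ → Fin n → ℕ) : Prop :=
  (∀ p k, V (p, k) p = k + 1) ∧
  (∀ p k j, j ≠ p → c.src p k = none →
      V (p, k) j = if k = 0 then 0 else V (p, k - 1) j) ∧
  (∀ p k j q m, j ≠ p → c.src p k = some (q, m) →
      V (p, k) j = max (if k = 0 then 0 else V (p, k - 1) j) (V (q, m) j))

end Comp

/-!
`V e p` is the number of events of `p` in the causal past of `e`, `e` included. Downwards: by
well-founded induction along happens-before (well-founded on the finitely many valid events because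
it is acyclic), an entry of `V e` for another process is inherited from an immediate predecessor of
`e`, so every event `(p, r)` with `r < V e p` precedes `e`. Upwards: clocks grow along every step;
at a receive, the receiver's own entry cannot drop below the sender's, since a send whose clock
knew of its own receive would close a cycle.
-/

namespace Comp

variable {n : ℕ} {c : Comp n} {V : Fin n × ℕ → Fin n → ℕ}

theorem finite_setOf_valid (c : Comp n) : {e | c.Valid e}.Finite :=
  (Set.finite_univ.prod (Set.finite_Iio (Finset.univ.sup c.len))).subset
    fun e (he : e.2 < c.len e.1) => ⟨trivial, he.trans_le (Finset.le_sup (Finset.mem_univ _))⟩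

theorem wellFounded_hb_valid (hacyclic : ∀ e, ¬ c.hb e e) :
    WellFounded fun a b : {e // c.Valid e} => c.hb a b :=
  have : Finite {e // c.Valid e} := (finite_setOf_valid c).to_subtype
  have : IsTrans {e // c.Valid e} fun a b => c.hb a b := ⟨fun _ _ _ => .trans⟩
  have : Std.Irrefl fun a b : {e // c.Valid e} => c.hb a b := ⟨fun a => hacyclic a⟩
  Finite.wellFounded_of_trans_of_irrefl _

theorem Step.valid_left (hM : c.Matched) {e e' : Fin n × ℕ} (hs : c.Step e e')
    (hv : c.Valid e') : c.Valid e := by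
  rcases hs with ⟨hp, hlt⟩ | hsrc
  · unfold Valid
    rw [hp]
    exact hlt.trans hv
  · exact (hM _ _ _ _ hsrc).2

namespace IsVC

theorem clock_le_succ (hV : c.IsVC V) (p : Fin n) (k : ℕ) (x : Fin n) :
    V (p, k) x ≤ V (p, k + 1) x := by
  rcases eq_or_ne x p with rfl | hx
  · rw [hV.1, hV.1]
    omega
  cases hsrc : c.src p (k + 1) with
  | none => simp [hV.2.1 p (k + 1) x hx hsrc]
  | some s => simp [hV.2.2 p (k + 1) x s.1 s.2 hx hsrc]

theorem monotone_clock (hV : c.IsVC V) (p x : Fin n) : Monotone fun k => V (p, k) x :=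
  monotone_nat_of_le_succ fun k => hV.clock_le_succ p k x

theorem exists_step_lt_clock (hV : c.IsVC V) {p x : Fin n} (hx : x ≠ p) {k r : ℕ}
    (hr : r < V (p, k) x) : ∃ e₀, c.Step e₀ (p, k) ∧ r < V e₀ x := by
  have of_prev (h : r < if k = 0 then 0 else V (p, k - 1) x) :
      ∃ e₀, c.Step e₀ (p, k) ∧ r < V e₀ x := by
    split_ifs at h with hk
    · exact absurd h (Nat.not_lt_zero r)
    · exact ⟨(p, k - 1), Or.inl ⟨rfl, by omega⟩, h⟩
  cases hsrc : c.src p k with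
  | none => exact of_prev (hV.2.1 p k x hx hsrc ▸ hr)
  | some s =>
    rcases lt_max_iff.mp (hV.2.2 p k x s.1 s.2 hx hsrc ▸ hr) with h | h
    · exact of_prev h
    · exact ⟨s, Or.inr hsrc, h⟩

theorem reflTransGen_of_lt_clock (hV : c.IsVC V) (hM : c.Matched)
    (hacyclic : ∀ e, ¬ c.hb e e) {e : Fin n × ℕ} (he : c.Valid e) {p : Fin n} {r : ℕ}
    (hr : r < V e p) : Relation.ReflTransGen c.Step (p, r) e := by
  lift e to {e // c.Valid e} using he
  induction e using (wellFounded_hb_valid hacyclic).induction generalizing r with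
  | _ e ih =>
    obtain ⟨⟨q, k⟩, hv⟩ := e
    rcases eq_or_ne p q with rfl | hpq
    · rw [hV.1] at hr
      rcases (Nat.lt_succ_iff.mp hr).lt_or_eq with hlt | rfl
      · exact .single (Or.inl ⟨rfl, hlt⟩)
      · exact .refl
    · obtain ⟨e₀, hs, hr₀⟩ := hV.exists_step_lt_clock hpq hr
      exact (ih ⟨e₀, hs.valid_left hM hv⟩ (.single hs) hr₀).tail hs

theorem clock_sender_le (hV : c.IsVC V) (hM : c.Matched) (hacyclic : ∀ e, ¬ c.hb e e)
    {p : Fin n} {b : ℕ} {s : Fin n × ℕ} (hsrc : c.src p b = some s) : V s p ≤ b := by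
  by_contra! hb
  have hv : c.Valid s := (hM _ _ _ _ hsrc).2
  exact hacyclic _ (.tail' (hV.reflTransGen_of_lt_clock hM hacyclic hv hb) (Or.inr hsrc))

theorem clock_le_of_step (hV : c.IsVC V) (hM : c.Matched) (hacyclic : ∀ e, ¬ c.hb e e)
    {e e' : Fin n × ℕ} (hs : c.Step e e') : V e ≤ V e' := by
  obtain ⟨p, b⟩ := e'
  intro x
  rcases hs with ⟨hp, hlt⟩ | hsrc
  · obtain ⟨q, a⟩ := e
    obtain rfl : q = p := hp
    exact hV.monotone_clock q x hlt.le
  rcases eq_or_ne x p with rfl | hx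
  · rw [hV.1]
    exact (hV.clock_sender_le hM hacyclic hsrc).trans b.le_succ
  · rw [hV.2.2 p b x e.1 e.2 hx hsrc]
    exact le_max_right _ _

theorem clock_le_of_hb (hV : c.IsVC V) (hM : c.Matched) (hacyclic : ∀ e, ¬ c.hb e e)
    {e e' : Fin n × ℕ} (h : c.hb e e') : V e ≤ V e' := by
  induction h with
  | single hs => exact hV.clock_le_of_step hM hacyclic hs
  | tail _ hs ih => exact ih.trans (hV.clock_le_of_step hM hacyclic hs)

end IsVC

end Comp

theorem hb_iff_single_component_general {n : ℕ} (c : Comp n)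
    (V : Fin n × ℕ → Fin n → ℕ)
    (hV : c.IsVC V) (hM : c.Matched) (hacyclic : ∀ e, ¬ c.hb e e)
    (i j : Fin n) (hij : i ≠ j) (k m : ℕ)
    (he' : c.Valid (j, m)) :
    c.hb (i, k) (j, m) ↔ V (i, k) i ≤ V (j, m) i := by
  refine ⟨fun h => hV.clock_le_of_hb hM hacyclic h i, fun h => ?_⟩
  have hk : k < V (j, m) i := by rwa [hV.1] at h
  rcases Relation.reflTransGen_iff_eq_or_transGen.mp
      (hV.reflTransGen_of_lt_clock hM hacyclic he' hk) with heq | hhb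
  · exact absurd (congrArg Prod.fst heq) hij.symm
  · exact hhb

/-- Pairwise causality test: for events `e` on process `i` and `e'` on
process `j` with `i ≠ j`, `e → e'` iff `V e i ≤ V e' i`: comparing a single
component suffices. -/
theorem hb_iff_single_component {n : ℕ} (c : Comp n)
    (V : Fin n × ℕ → Fin n → ℕ)
    (hV : c.IsVC V) (hM : c.Matched) (hacyclic : ∀ e, ¬ c.hb e e)
    (i j : Fin n) (hij : i ≠ j) (k m : ℕ)
    (he : c.Valid (i, k)) (he' : c.Valid (j, m)) :
    c.hb (i, k) (j, m) ↔ V (i, k) i ≤ V (j, m) i :=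
  hb_iff_single_component_general c V hV hM hacyclic i j hij k m he'
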